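/- arXiv:math/9810070 — 2 statements merged into one kernel-verified Lean document; each statement's English description precedes it below -/
import Mathlib

section
/- Let V be a multiplicative partial isometry on H⊗H with left leg Â = {(id⊗ω)(V) : ω ∈ L(H)*}. Then ρ(ω)ρ(ω') = ρ(ω◇ω') where (ω◇ω')(X) = (ω⊗ω')(V(X⊗1)V*); in particular Â is a subalgebra of L(H). -/
open Matrix

namespace MPIpaper

variable {n : Type*} [Fintype n] [DecidableEq n]

noncomputable section

/-- `W₁₂ = W ⊗ 1` on `H ⊗ H ⊗ H`. -/
def leg12 (V : Matrix (n × n) (n × n) ℂ) : Matrix (n × n × n) (n × n × n) ℂ :=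
  Matrix.of fun p q => V (p.1, p.2.1) (q.1, q.2.1) * (if p.2.2 = q.2.2 then (1 : ℂ) else 0)

/-- `W₂₃ = 1 ⊗ W` on `H ⊗ H ⊗ H`. -/
def leg23 (V : Matrix (n × n) (n × n) ℂ) : Matrix (n × n × n) (n × n × n) ℂ :=
  Matrix.of fun p q => (if p.1 = q.1 then (1 : ℂ) else 0) * V p.2 q.2

/-- `W₁₃ = (1⊗Σ)(W⊗1)(1⊗Σ)` on `H ⊗ H ⊗ H`. -/
def leg13 (V : Matrix (n × n) (n × n) ℂ) : Matrix (n × n × n) (n × n × n) ℂ :=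
  Matrix.of fun p q => V (p.1, p.2.2) (q.1, q.2.2) * (if p.2.1 = q.2.1 then (1 : ℂ) else 0)

/-- A multiplicative partial isometry: `VV*V = V`, the pentagon equation, and the
three auxiliary (hexagon-type) equations. -/
def IsMPI (V : Matrix (n × n) (n × n) ℂ) : Prop :=
  V * Vᴴ * V = V ∧
  leg23 V * leg12 V = leg12 V * leg13 V * leg23 V ∧
  leg13 V * leg23 V * (leg23 V)ᴴ = (leg12 V)ᴴ * leg12 V * leg13 V ∧
  leg12 V * (leg12 V)ᴴ * leg23 V = leg23 V * leg12 V * (leg12 V)ᴴ ∧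
  leg12 V * (leg23 V)ᴴ * leg23 V = (leg23 V)ᴴ * leg23 V * leg12 V

/-- `λ(ω) = (ω ⊗ id)(V)`. -/
def lam (ω : Matrix n n ℂ →ₗ[ℂ] ℂ) (V : Matrix (n × n) (n × n) ℂ) : Matrix n n ℂ :=
  Matrix.of fun i j => ω (Matrix.of fun a b => V (a, i) (b, j))

/-- `ρ(ω) = (id ⊗ ω)(V)`. -/
def rho (ω : Matrix n n ℂ →ₗ[ℂ] ℂ) (V : Matrix (n × n) (n × n) ℂ) : Matrix n n ℂ :=
  Matrix.of fun i j => ω (Matrix.of fun a b => V (i, a) (j, b))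

/-- `1 ⊗ X` on `H ⊗ H`. -/
def oneTensor (X : Matrix n n ℂ) : Matrix (n × n) (n × n) ℂ :=
  Matrix.of fun p q => (if p.1 = q.1 then (1 : ℂ) else 0) * X p.2 q.2

/-- `X ⊗ 1` on `H ⊗ H`. -/
def tensorOne (X : Matrix n n ℂ) : Matrix (n × n) (n × n) ℂ :=
  Matrix.of fun p q => X p.1 q.1 * (if p.2 = q.2 then (1 : ℂ) else 0)

/-- `Δ(X) = V (X ⊗ 1) V*`. -/
def Delta (V : Matrix (n × n) (n × n) ℂ) (X : Matrix n n ℂ) : Matrix (n × n) (n × n) ℂ :=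
  V * tensorOne X * Vᴴ

/-- `Δ̂(X) = V* (1 ⊗ X) V`. -/
def hatDelta (V : Matrix (n × n) (n × n) ℂ) (X : Matrix n n ℂ) : Matrix (n × n) (n × n) ℂ :=
  Vᴴ * oneTensor X * V

/-- `(ω ⊗ ω')(W)` for an operator `W` on `H ⊗ H`. -/
def applyBoth (ω ω' : Matrix n n ℂ →ₗ[ℂ] ℂ) (W : Matrix (n × n) (n × n) ℂ) : ℂ :=
  ω (Matrix.of fun i j => ω' (Matrix.of fun k l => W (i, k) (j, l)))

end


set_option linter.unusedSectionVars false in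
lemma leg12_mul (A B : Matrix (n × n) (n × n) ℂ) : leg12 (A * B) = leg12 A * leg12 B := by
  ext ⟨a,c,e⟩ ⟨b,d,f⟩
  simp [leg12, Matrix.mul_apply, Fintype.sum_prod_type, ite_and, Finset.sum_ite_eq,
    Finset.mul_sum, Finset.sum_mul, mul_ite, ite_mul, mul_assoc]

set_option linter.unusedSectionVars false in
lemma leg12_ct (A : Matrix (n × n) (n × n) ℂ) : (leg12 A)ᴴ = leg12 Aᴴ := by
  ext ⟨a,c,e⟩ ⟨b,d,f⟩
  simp only [leg12, Matrix.conjTranspose_apply, Matrix.of_apply]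
  split_ifs with h h' h' <;> simp_all [eq_comm]

lemma key (V : Matrix (n × n) (n × n) ℂ) (hV : IsMPI V) :
    leg12 V * leg13 V = leg23 V * leg12 V * (leg23 V)ᴴ := by
  obtain ⟨h1, h2, h3, -, -⟩ := hV
  have h12 : leg12 V * (leg12 V)ᴴ * leg12 V = leg12 V := by
    rw [leg12_ct, ← leg12_mul, ← leg12_mul, h1]
  calc leg12 V * leg13 V = leg12 V * (leg12 V)ᴴ * leg12 V * leg13 V := by rw [h12]
    _ = leg12 V * ((leg12 V)ᴴ * leg12 V * leg13 V) := by simp only [Matrix.mul_assoc]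
    _ = leg12 V * (leg13 V * leg23 V * (leg23 V)ᴴ) := by rw [h3]
    _ = leg12 V * leg13 V * leg23 V * (leg23 V)ᴴ := by simp only [Matrix.mul_assoc]
    _ = leg23 V * leg12 V * (leg23 V)ᴴ := by rw [← h2]

lemma entry_eq (V : Matrix (n × n) (n × n) ℂ) (hV : IsMPI V) (i j a b c d : n) :
    ∑ k, V (i,a) (k,b) * V (k,c) (j,d)
      = (V * tensorOne (Matrix.of fun a b => V (i,a) (j,b)) * Vᴴ) (a,c) (b,d) := by
  have h := congrFun (congrFun (key V hV) (i,a,c)) (j,b,d)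
  have lhs : (leg12 V * leg13 V) (i,a,c) (j,b,d) = ∑ k, V (i,a) (k,b) * V (k,c) (j,d) := by
    simp [leg12, leg13, Matrix.mul_apply, Fintype.sum_prod_type, ite_and, Finset.sum_ite_eq,
      mul_ite, ite_mul, Finset.mul_sum, Finset.sum_mul]
  have rhs : (leg23 V * leg12 V * (leg23 V)ᴴ) (i,a,c) (j,b,d)
      = (V * tensorOne (Matrix.of fun a b => V (i,a) (j,b)) * Vᴴ) (a,c) (b,d) := by
    simp [leg12, leg23, tensorOne, Matrix.mul_apply, Matrix.conjTranspose_apply,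
      Fintype.sum_prod_type, ite_and, Finset.sum_ite_eq, mul_ite, ite_mul,
      Finset.mul_sum, Finset.sum_mul, apply_ite, mul_assoc, mul_comm, mul_left_comm]
  rw [← lhs, h, rhs]

set_option linter.unusedSectionVars false in
lemma applyBoth_add (ω ω' : Matrix n n ℂ →ₗ[ℂ] ℂ) (W W' : Matrix (n × n) (n × n) ℂ) :
    applyBoth ω ω' (W + W') = applyBoth ω ω' W + applyBoth ω ω' W' := by
  unfold applyBoth
  have h : ∀ i j : n, (Matrix.of fun k l => (W + W') (i,k) (j,l))
      = (Matrix.of fun k l => W (i,k) (j,l)) + (Matrix.of fun k l => W' (i,k) (j,l)) :=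
    fun i j => rfl
  simp only [h, map_add]
  exact map_add ω _ _

set_option linter.unusedSectionVars false in
lemma applyBoth_smul (ω ω' : Matrix n n ℂ →ₗ[ℂ] ℂ) (c : ℂ) (W : Matrix (n × n) (n × n) ℂ) :
    applyBoth ω ω' (c • W) = c * applyBoth ω ω' W := by
  unfold applyBoth
  have h : ∀ i j : n, (Matrix.of fun k l => (c • W) (i,k) (j,l))
      = c • (Matrix.of fun k l => W (i,k) (j,l)) := fun i j => rfl
  simp only [h, LinearMap.map_smul, smul_eq_mul]
  have : (Matrix.of fun i j => c * ω' (Matrix.of fun k l => W (i,k) (j,l)))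
      = c • (Matrix.of fun i j => ω' (Matrix.of fun k l => W (i,k) (j,l))) := rfl
  rw [this, LinearMap.map_smul, smul_eq_mul]

set_option linter.unusedSectionVars false in
lemma tensorOne_add (X Y : Matrix n n ℂ) : tensorOne (X + Y) = tensorOne X + tensorOne Y := by
  ext ⟨a,c⟩ ⟨b,d⟩; simp only [tensorOne, Matrix.of_apply, Matrix.add_apply, add_mul]

set_option linter.unusedSectionVars false in
lemma tensorOne_smul (c : ℂ) (X : Matrix n n ℂ) : tensorOne (c • X) = c • tensorOne X := by
  ext ⟨a,c'⟩ ⟨b,d⟩; simp [tensorOne, mul_assoc]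

lemma main_entry (V : Matrix (n × n) (n × n) ℂ) (hV : IsMPI V)
    (ω ω' : Matrix n n ℂ →ₗ[ℂ] ℂ) (i j : n) :
    ∑ k, ω (Matrix.of fun a b => V (i,a) (k,b)) * ω' (Matrix.of fun a b => V (k,a) (j,b))
      = applyBoth ω ω' (V * tensorOne (Matrix.of fun a b => V (i,a) (j,b)) * Vᴴ) := by
  unfold applyBoth
  have hM : ∀ a b : n,
      (Matrix.of fun c d => (V * tensorOne (Matrix.of fun a b => V (i,a) (j,b)) * Vᴴ) (a,c) (b,d))
        = ∑ k, V (i,a) (k,b) • (Matrix.of fun c d => V (k,c) (j,d)) := by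
    intro a b
    ext c d
    rw [Matrix.sum_apply]
    simp only [Matrix.of_apply, Matrix.smul_apply, smul_eq_mul]
    exact (entry_eq V hV i j a b c d).symm
  simp only [hM, map_sum, LinearMap.map_smul, smul_eq_mul]
  have h2 : (Matrix.of fun a b => ∑ k, V (i,a) (k,b) * ω' (Matrix.of fun c d => V (k,c) (j,d)))
      = ∑ k, ω' (Matrix.of fun c d => V (k,c) (j,d)) • (Matrix.of fun a b => V (i,a) (k,b)) := by
    ext a b
    rw [Matrix.sum_apply]
    simp [mul_comm]
  rw [h2, map_sum]
  simp only [LinearMap.map_smul, smul_eq_mul]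
  exact Finset.sum_congr rfl fun k _ => mul_comm _ _


theorem statement7 (V : Matrix (n × n) (n × n) ℂ) (hV : IsMPI V)
    (ω ω' : Matrix n n ℂ →ₗ[ℂ] ℂ) :
    rho ω V * rho ω' V =
      Matrix.of (fun i j =>
        applyBoth ω ω' (V * tensorOne (Matrix.of fun a b => V (i, a) (j, b)) * Vᴴ)) ∧
    ∃ μ : Matrix n n ℂ →ₗ[ℂ] ℂ, rho ω V * rho ω' V = rho μ V := by
  have h1 : rho ω V * rho ω' V =
      Matrix.of (fun i j =>
        applyBoth ω ω' (V * tensorOne (Matrix.of fun a b => V (i, a) (j, b)) * Vᴴ)) := by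
    ext i j
    rw [Matrix.mul_apply]
    exact main_entry V hV ω ω' i j
  refine ⟨h1, ⟨{
      toFun := fun X => applyBoth ω ω' (V * tensorOne X * Vᴴ)
      map_add' := fun X Y => by
        show applyBoth ω ω' (V * tensorOne (X + Y) * Vᴴ) = _ + _
        rw [tensorOne_add, Matrix.mul_add, Matrix.add_mul, applyBoth_add]
      map_smul' := fun c X => by
        show applyBoth ω ω' (V * tensorOne (c • X) * Vᴴ)
          = c * applyBoth ω ω' (V * tensorOne X * Vᴴ)
        rw [tensorOne_smul, Matrix.mul_smul, Matrix.smul_mul, applyBoth_smul] }, h1.trans rfl⟩⟩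

end MPIpaper
end

section
/- Let V be a multiplicative partial isometry on H⊗H, Δ̂(X) = V*(1⊗X)V, and Â the left leg of V. Then Δ̂(ρ(ω))Δ̂(ρ(ω')) = Δ̂(ρ(ω)ρ(ω')) for all ω, ω' ∈ L(H)*, i.e. Δ̂ restricts to an algebra homomorphism Â → Â⊗Â. -/
open Matrix

namespace MPIpaper

variable {n : Type*} [Fintype n] [DecidableEq n]

noncomputable section AuxMPI

/-- `X ⊗ 1` (legs 1,2) on `H ⊗ H ⊗ H`, for `X` an operator on `H ⊗ H`. -/
def ext12 (X : Matrix (n × n) (n × n) ℂ) : Matrix (n × n × n) (n × n × n) ℂ :=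
  Matrix.of fun p q => X (p.1, p.2.1) (q.1, q.2.1) * (if p.2.2 = q.2.2 then (1 : ℂ) else 0)

/-- Slicing the third leg with a functional `ω`. -/
def slice3 (ω : Matrix n n ℂ →ₗ[ℂ] ℂ) (W : Matrix (n × n × n) (n × n × n) ℂ) :
    Matrix (n × n) (n × n) ℂ :=
  Matrix.of fun p q => ω (Matrix.of fun a b => W (p.1, p.2, a) (q.1, q.2, b))

lemma leg12_eq_ext12 (V : Matrix (n × n) (n × n) ℂ) : leg12 V = ext12 V := rfl

lemma ext12_conjTranspose (X : Matrix (n × n) (n × n) ℂ) : (ext12 X)ᴴ = ext12 Xᴴ := by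
  ext p q
  by_cases h : p.2.2 = q.2.2 <;>
    simp [ext12, Matrix.conjTranspose_apply, h, eq_comm]

lemma slice3_ext12_mul (ω : Matrix n n ℂ →ₗ[ℂ] ℂ) (X : Matrix (n × n) (n × n) ℂ)
    (W : Matrix (n × n × n) (n × n × n) ℂ) :
    slice3 ω (ext12 X * W) = X * slice3 ω W := by
  ext p q
  show ω (Matrix.of fun a b => (ext12 X * W) (p.1, p.2, a) (q.1, q.2, b)) = _
  have h : (Matrix.of fun a b => (ext12 X * W) (p.1, p.2, a) (q.1, q.2, b))
      = ∑ r : n × n, X (p.1, p.2) r • Matrix.of (fun a b => W (r.1, r.2, a) (q.1, q.2, b)) := by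
    ext a b
    simp [Matrix.mul_apply, ext12, Fintype.sum_prod_type, Matrix.sum_apply,
      mul_ite, mul_zero, mul_one]
  rw [h, map_sum, Matrix.mul_apply]
  refine Finset.sum_congr rfl fun r _ => ?_
  rw [ω.map_smul, smul_eq_mul]
  rfl

lemma slice3_mul_ext12 (ω : Matrix n n ℂ →ₗ[ℂ] ℂ) (X : Matrix (n × n) (n × n) ℂ)
    (W : Matrix (n × n × n) (n × n × n) ℂ) :
    slice3 ω (W * ext12 X) = slice3 ω W * X := by
  ext p q
  show ω (Matrix.of fun a b => (W * ext12 X) (p.1, p.2, a) (q.1, q.2, b)) = _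
  have h : (Matrix.of fun a b => (W * ext12 X) (p.1, p.2, a) (q.1, q.2, b))
      = ∑ r : n × n, X r (q.1, q.2) • Matrix.of (fun a b => W (p.1, p.2, a) (r.1, r.2, b)) := by
    ext a b
    simp [Matrix.mul_apply, ext12, Fintype.sum_prod_type, Matrix.sum_apply,
      ite_mul, zero_mul, one_mul, mul_comm]
  rw [h, map_sum, Matrix.mul_apply]
  refine Finset.sum_congr rfl fun r _ => ?_
  rw [ω.map_smul, smul_eq_mul, mul_comm]
  rfl

lemma slice3_leg23 (ω : Matrix n n ℂ →ₗ[ℂ] ℂ) (V : Matrix (n × n) (n × n) ℂ) :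
    slice3 ω (leg23 V) = oneTensor (rho ω V) := by
  ext p q
  by_cases h : p.1 = q.1
  · simp [slice3, leg23, oneTensor, rho, h]
  · have h0 : (Matrix.of fun a b => (leg23 V) (p.1, p.2, a) (q.1, q.2, b)) = 0 := by
      ext a b; simp [leg23, h]
    simp [slice3, oneTensor, h, h0]

lemma leg23_mul (A B : Matrix (n × n) (n × n) ℂ) : leg23 (A * B) = leg23 A * leg23 B := by
  ext p q
  simp [leg23, Matrix.mul_apply, Fintype.sum_prod_type, ite_mul, mul_ite,
    mul_zero, zero_mul, one_mul, mul_one, Finset.mul_sum]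

lemma leg23_conjTranspose (A : Matrix (n × n) (n × n) ℂ) : (leg23 A)ᴴ = leg23 Aᴴ := by
  ext p q
  by_cases h : p.1 = q.1 <;>
    simp [leg23, Matrix.conjTranspose_apply, h, eq_comm]

lemma oneTensor_mul (X Y : Matrix n n ℂ) : oneTensor (X * Y) = oneTensor X * oneTensor Y := by
  ext p q
  simp [oneTensor, Matrix.mul_apply, Fintype.sum_prod_type, ite_mul, mul_ite,
    mul_zero, zero_mul, one_mul, mul_one, Finset.mul_sum]

/-- The evaluation functional `M ↦ M a b`. -/
def evLin (a b : n) : Matrix n n ℂ →ₗ[ℂ] ℂ where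
  toFun M := M a b
  map_add' _ _ := rfl
  map_smul' _ _ := rfl

lemma omega_apply (ω : Matrix n n ℂ →ₗ[ℂ] ℂ) (M : Matrix n n ℂ) :
    ω M = ∑ a, ∑ b, M a b * ω (Matrix.single a b 1) := by
  conv_lhs => rw [Matrix.matrix_eq_sum_single M]
  rw [map_sum]
  refine Finset.sum_congr rfl fun a _ => ?_
  rw [map_sum]
  refine Finset.sum_congr rfl fun b _ => ?_
  have h : Matrix.single a b (M a b) = M a b • Matrix.single a b 1 := by
    rw [Matrix.smul_single, smul_eq_mul, mul_one]
  rw [h, ω.map_smul, smul_eq_mul]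

end AuxMPI


theorem statement10 (V : Matrix (n × n) (n × n) ℂ) (hV : IsMPI V)
    (ω ω' : Matrix n n ℂ →ₗ[ℂ] ℂ) :
    hatDelta V (rho ω V) * hatDelta V (rho ω' V) = hatDelta V (rho ω V * rho ω' V) ∧
    hatDelta V (rho ω V) ∈
      Submodule.span ℂ {M : Matrix (n × n) (n × n) ℂ |
        ∃ ω₁ ω₂ : Matrix n n ℂ →ₗ[ℂ] ℂ,
          M = Matrix.kroneckerMap (· * ·) (rho ω₁ V) (rho ω₂ V)} := by
  obtain ⟨h1, hpent, hhex1, hhex2, -⟩ := hV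
  -- `V Vᴴ` commutes with `1 ⊗ ρ(μ)` (slice the third hexagon relation on leg 3)
  have hcomm : ∀ μ : Matrix n n ℂ →ₗ[ℂ] ℂ,
      V * Vᴴ * oneTensor (rho μ V) = oneTensor (rho μ V) * (V * Vᴴ) := by
    intro μ
    have key := congrArg (slice3 μ) hhex2
    rw [leg12_eq_ext12, ext12_conjTranspose, mul_assoc (ext12 V), slice3_ext12_mul,
      slice3_ext12_mul, slice3_mul_ext12, slice3_mul_ext12, slice3_leg23] at key
    rw [mul_assoc, key, mul_assoc]
  -- `V₂₃ V₂₃ᴴ V₂₃ = V₂₃`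
  have hVVV : leg23 V * ((leg23 V)ᴴ * leg23 V) = leg23 V := by
    rw [leg23_conjTranspose, ← leg23_mul, ← leg23_mul, ← mul_assoc, h1]
  -- `V₁₂ᴴ V₂₃ V₁₂ = V₁₃ V₂₃`
  have heq : (leg12 V)ᴴ * (leg23 V * leg12 V) = leg13 V * leg23 V := by
    rw [hpent]
    rw [show (leg12 V)ᴴ * (leg12 V * leg13 V * leg23 V)
        = (leg12 V)ᴴ * leg12 V * leg13 V * leg23 V by simp only [mul_assoc]]
    rw [← hhex1, mul_assoc, mul_assoc, hVVV]
  -- `Δ̂(ρ(μ)) = (id ⊗ id ⊗ μ)(V₁₃ V₂₃)`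
  have hrep : ∀ μ : Matrix n n ℂ →ₗ[ℂ] ℂ,
      hatDelta V (rho μ V) = slice3 μ (leg13 V * leg23 V) := by
    intro μ
    have hs : slice3 μ ((leg12 V)ᴴ * (leg23 V * leg12 V)) = Vᴴ * (oneTensor (rho μ V) * V) := by
      rw [leg12_eq_ext12, ext12_conjTranspose, slice3_ext12_mul, slice3_mul_ext12, slice3_leg23]
    rw [← heq, hs]
    show Vᴴ * oneTensor (rho μ V) * V = _
    rw [mul_assoc]
  refine ⟨?_, ?_⟩
  · -- multiplicativity
    show Vᴴ * oneTensor (rho ω V) * V * (Vᴴ * oneTensor (rho ω' V) * V)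
        = Vᴴ * oneTensor (rho ω V * rho ω' V) * V
    calc Vᴴ * oneTensor (rho ω V) * V * (Vᴴ * oneTensor (rho ω' V) * V)
        = Vᴴ * oneTensor (rho ω V) * (V * Vᴴ * oneTensor (rho ω' V) * V) := by
          simp only [mul_assoc]
      _ = Vᴴ * oneTensor (rho ω V) * (oneTensor (rho ω' V) * (V * Vᴴ) * V) := by
          rw [hcomm ω']
      _ = Vᴴ * oneTensor (rho ω V) * (oneTensor (rho ω' V) * (V * Vᴴ * V)) := by
          simp only [mul_assoc]
      _ = Vᴴ * oneTensor (rho ω V) * (oneTensor (rho ω' V) * V) := by rw [h1]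
      _ = Vᴴ * (oneTensor (rho ω V) * oneTensor (rho ω' V)) * V := by simp only [mul_assoc]
      _ = Vᴴ * oneTensor (rho ω V * rho ω' V) * V := by rw [← oneTensor_mul]
  · -- membership in Â ⊗ Â
    have hspan : slice3 ω (leg13 V * leg23 V)
        = ∑ t : n × n × n, ω (Matrix.single t.1 t.2.1 1) •
            Matrix.kroneckerMap (· * ·) (rho (evLin t.1 t.2.2) V) (rho (evLin t.2.2 t.2.1) V) := by
      ext p q
      have hentry : ∀ a b : n, (leg13 V * leg23 V) (p.1, p.2, a) (q.1, q.2, b)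
          = ∑ c : n, V (p.1, a) (q.1, c) * V (p.2, c) (q.2, b) := by
        intro a b
        simp [Matrix.mul_apply, leg13, leg23, Fintype.sum_prod_type, ite_mul, mul_ite,
          mul_zero, zero_mul, one_mul, mul_one, Finset.sum_ite_eq, Finset.sum_ite_eq']
      show ω (Matrix.of fun a b => (leg13 V * leg23 V) (p.1, p.2, a) (q.1, q.2, b)) = _
      rw [omega_apply]
      simp only [Matrix.sum_apply, Matrix.smul_apply, smul_eq_mul, Matrix.kroneckerMap_apply,
        Matrix.of_apply, hentry, Finset.sum_mul, Fintype.sum_prod_type]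
      refine Finset.sum_congr rfl fun a _ => Finset.sum_congr rfl fun b _ =>
        Finset.sum_congr rfl fun c _ => ?_
      show V (p.1, a) (q.1, c) * V (p.2, c) (q.2, b) * ω (Matrix.single a b 1)
          = ω (Matrix.single a b 1) * (V (p.1, a) (q.1, c) * V (p.2, c) (q.2, b))
      ring
    rw [hrep ω, hspan]
    refine Submodule.sum_mem _ fun t _ => Submodule.smul_mem _ _ ?_
    exact Submodule.subset_span ⟨evLin t.1 t.2.2, evLin t.2.2 t.2.1, rfl⟩


end MPIpaper
end
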